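/- If G is a graph of order n with distinguishing number D(G) = 2, then Det(G) ≤ n/2. -/

import Mathlib

/-! Take a distinguishing 2-labeling `f`. If two automorphisms agree on one colour class, the
automorphism `σ = ψ⁻¹φ` fixes that class pointwise, hence maps the other class into itself,
so it preserves `f` and is the identity. Thus both colour classes are determining sets; their
sizes add up to `n`, so the smaller one has at most `n / 2` vertices. -/

open SimpleGraph

/-- A labeling `f : V → Fin d` is `d`-distinguishing if the only automorphism
preserving all labels is the identity. -/
def IsDistinguishing {V : Type*} (G : SimpleGraph V) (d : ℕ) (f : V → Fin d) : Prop :=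
  ∀ φ : G ≃g G, (∀ v, f (φ v) = f v) → ∀ v, φ v = v

/-- The distinguishing number `D(G)`. -/
noncomputable def distNum {V : Type*} (G : SimpleGraph V) : ℕ :=
  sInf {d | ∃ f : V → Fin d, IsDistinguishing G d f}

/-- The cost `ρ_d(G)`: the minimum size of a label class in a
`d`-distinguishing labeling of `G`. -/
noncomputable def cost {V : Type*} (G : SimpleGraph V) [Fintype V] (d : ℕ) : ℕ :=
  sInf {k | ∃ (f : V → Fin d) (i : Fin d), IsDistinguishing G d f ∧
    k = (Finset.univ.filter (fun v => f v = i)).card}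

/-- `S` is a determining set for `G` if automorphisms agreeing on `S` agree everywhere. -/
def IsDeterminingSet {V : Type*} (G : SimpleGraph V) (S : Set V) : Prop :=
  ∀ φ ψ : G ≃g G, (∀ v ∈ S, φ v = ψ v) → ∀ v, φ v = ψ v

/-- The determining number `Det(G)`. -/
noncomputable def detNum {V : Type*} (G : SimpleGraph V) [Fintype V] : ℕ :=
  sInf {k | ∃ S : Finset V, IsDeterminingSet G ↑S ∧ S.card = k}

namespace SimpleGraph

variable {V : Type*} {G : SimpleGraph V}

lemma isDeterminingSet_of_forall_eq_self {S : Set V}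
    (h : ∀ σ : G ≃g G, (∀ v ∈ S, σ v = v) → ∀ v, σ v = v) : IsDeterminingSet G S := by
  intro φ ψ hφψ v
  have hσ := h (φ.trans ψ.symm) fun w hw => by simp [hφψ w hw]
  simpa using congrArg ψ (hσ v)

lemma isDeterminingSet_of_isDistinguishing {d : ℕ} {f : V → Fin d}
    (hf : IsDistinguishing G d f) {S : Set V} (j : Fin d) (hS : ∀ v ∉ S, f v = j) :
    IsDeterminingSet G S := by
  refine isDeterminingSet_of_forall_eq_self fun σ hσ => hf σ fun v => ?_
  by_cases hv : v ∈ S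
  · rw [hσ v hv]
  · have hσv : σ v ∉ S := fun h => hv (σ.injective (hσ _ h) ▸ h)
    rw [hS v hv, hS _ hσv]

lemma exists_isDistinguishing_of_distNum_eq {d : ℕ} (hd : distNum G = d) (hd₀ : d ≠ 0) :
    ∃ f : V → Fin d, IsDistinguishing G d f := by
  subst hd
  refine Nat.sInf_mem (s := {d | ∃ f : V → Fin d, IsDistinguishing G d f}) ?_
  by_contra hempty
  rw [Set.not_nonempty_iff_eq_empty] at hempty
  exact hd₀ (by rw [distNum, hempty, Nat.sInf_empty])

lemma detNum_le_card [Fintype V] {S : Finset V} (hS : IsDeterminingSet G S) :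
    detNum G ≤ S.card :=
  Nat.sInf_le ⟨S, hS, rfl⟩

end SimpleGraph

theorem stmt_7 {V : Type*} [Fintype V] (G : SimpleGraph V) (n : ℕ)
    (hn : Fintype.card V = n) (hd : distNum G = 2) :
    (detNum G : ℝ) ≤ (n : ℝ) / 2 := by
  obtain ⟨f, hf⟩ := exists_isDistinguishing_of_distNum_eq hd two_ne_zero
  set S₀ := Finset.univ.filter fun v => f v = 0
  set S₁ := Finset.univ.filter fun v => ¬f v = 0
  have h₀ : detNum G ≤ S₀.card := detNum_le_card <|
    isDeterminingSet_of_isDistinguishing hf 1 fun v hv =>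
      Fin.eq_one_of_ne_zero _ (by simpa [S₀] using hv)
  have h₁ : detNum G ≤ S₁.card := detNum_le_card <|
    isDeterminingSet_of_isDistinguishing hf 0 fun v hv => by simpa [S₁] using hv
  have hsum : S₀.card + S₁.card = n := by
    rw [Finset.card_filter_add_card_filter_not, Finset.card_univ, hn]
  rw [le_div_iff₀ two_pos]
  exact_mod_cast (by omega : detNum G * 2 ≤ n)
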